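/- Let 𝐙 be a nilpotent supermatrix over Λ_N (all entries in Λ_N^+) such that e^𝐙 ∈ O_0, i.e. (e^𝐙)^{ST} Q e^𝐙 = Q. Then 𝐙^{ST} Q + Q 𝐙 = 0. -/

import Mathlib

open Matrix

noncomputable section
noncomputable section

/-- The Grassmann algebra `Λ_N` over `ℝ`. -/
abbrev GA (N : ℕ) := ExteriorAlgebra ℝ (Fin N → ℝ)

/-- Even elements of the Grassmann algebra. -/
def GA.IsEven {N : ℕ} (x : GA N) : Prop :=
  x ∈ CliffordAlgebra.evenOdd (0 : QuadraticForm ℝ (Fin N → ℝ)) 0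

/-- Odd elements of the Grassmann algebra. -/
def GA.IsOdd {N : ℕ} (x : GA N) : Prop :=
  x ∈ CliffordAlgebra.evenOdd (0 : QuadraticForm ℝ (Fin N → ℝ)) 1

/-- The standard symplectic matrix `Ω_{2n}`, block-diagonal with 2×2 blocks `(0,1;−1,0)`. -/
def OmegaR (n : ℕ) : Matrix (Fin (2*n)) (Fin (2*n)) ℝ :=
  Matrix.of fun i j => if (i:ℕ) % 2 = 0 ∧ (j:ℕ) = (i:ℕ) + 1 then 1
    else if (j:ℕ) % 2 = 0 ∧ (i:ℕ) = (j:ℕ) + 1 then -1 else 0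

/-- `Ω_{2n}` viewed with entries in the Grassmann algebra. -/
def OmegaL (N n : ℕ) : Matrix (Fin (2*n)) (Fin (2*n)) (GA N) :=
  (OmegaR n).map (algebraMap ℝ (GA N))

/-- The supermatrix `Q = diag(I_m, −½Ω_{2n})`. -/
def Qm (N m n : ℕ) : Matrix (Fin m ⊕ Fin (2*n)) (Fin m ⊕ Fin (2*n)) (GA N) :=
  Matrix.fromBlocks 1 0 0 (-((1/2 : ℝ) • OmegaL N n))

/-- The supertranspose `M^{ST} = (Aᵀ, C'ᵀ; −B'ᵀ, Dᵀ)`. -/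
def superT {N m k : ℕ} (M : Matrix (Fin m ⊕ Fin k) (Fin m ⊕ Fin k) (GA N)) :
    Matrix (Fin m ⊕ Fin k) (Fin m ⊕ Fin k) (GA N) :=
  Matrix.fromBlocks (M.toBlocks₁₁)ᵀ (M.toBlocks₂₁)ᵀ (-(M.toBlocks₁₂)ᵀ) (M.toBlocks₂₂)ᵀ

def IsSuperMat {N m k : ℕ} (M : Matrix (Fin m ⊕ Fin k) (Fin m ⊕ Fin k) (GA N)) : Prop :=
  (∀ i j, (M.toBlocks₁₁ i j).IsEven) ∧ (∀ i j, (M.toBlocks₁₂ i j).IsOdd) ∧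
  (∀ i j, (M.toBlocks₂₁ i j).IsOdd) ∧ (∀ i j, (M.toBlocks₂₂ i j).IsEven)

/-- The exponential of a supermatrix all of whose entries are nilpotent (zero body):
since such a matrix satisfies `M^(N+1) = 0`, the exponential series is the finite sum
`∑_{j=0}^{N} M^j / j!`. -/
def expNil {N m k : ℕ} (M : Matrix (Fin m ⊕ Fin k) (Fin m ⊕ Fin k) (GA N)) :
    Matrix (Fin m ⊕ Fin k) (Fin m ⊕ Fin k) (GA N) :=
  ∑ j ∈ Finset.range (N + 1), (j.factorial : ℝ)⁻¹ • M ^ j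

/-! Even elements of `Λ_N` are central and odd elements anticommute, so the supertranspose
reverses products of supermatrices and `(e^𝐙)^{ST} = e^{𝐙^{ST}}`. Entries with zero body
lie in the ideal generated by the generators, whose `(N+1)`-st power vanishes, so
`𝐙^{N+1} = 0` and `e^{t𝐙}` is a polynomial in `t`. Since `e^{p𝐙} = (e^𝐙)^p`, the polynomial
`e^{t𝐙^{ST}} Q e^{t𝐙}` equals `Q` at every natural number `t`, hence is constant; its linear
coefficient is `𝐙^{ST} Q + Q 𝐙`. -/

namespace ExteriorAlgebra

variable {R M : Type*} [CommRing R] [AddCommGroup M] [Module R M]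

theorem commute_ι_mul_ι (a b : M) (y : ExteriorAlgebra R M) : Commute (ι R a * ι R b) y := by
  induction y using ExteriorAlgebra.induction with
  | algebraMap r => exact Algebra.commute_algebraMap_right r _
  | ι c =>
    have hbc : ι R b * ι R c = -(ι R c * ι R b) :=
      eq_neg_of_add_eq_zero_left (ι_add_mul_swap b c)
    have hac : ι R a * ι R c = -(ι R c * ι R a) :=
      eq_neg_of_add_eq_zero_left (ι_add_mul_swap a c)
    change ι R a * ι R b * ι R c = ι R c * (ι R a * ι R b)
    rw [mul_assoc, hbc, mul_neg, ← mul_assoc, hac, neg_mul, neg_neg, mul_assoc]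
  | mul x y hx hy => exact hx.mul_right hy
  | add x y hx hy => exact hx.add_right hy

theorem commute_of_mem_evenOdd_zero {x : ExteriorAlgebra R M}
    (hx : x ∈ CliffordAlgebra.evenOdd (0 : QuadraticForm R M) 0) (y : ExteriorAlgebra R M) :
    Commute x y := by
  induction x, hx using CliffordAlgebra.even_induction with
  | algebraMap r => exact Algebra.commute_algebraMap_left r y
  | add x x' _ _ hx hx' => exact hx.add_left hx'
  | ι_mul_ι_mul a b x _ hx => exact (commute_ι_mul_ι a b y).mul_left hx

theorem mul_eq_neg_mul_of_mem_evenOdd_one {x y : ExteriorAlgebra R M}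
    (hx : x ∈ CliffordAlgebra.evenOdd (0 : QuadraticForm R M) 1)
    (hy : y ∈ CliffordAlgebra.evenOdd (0 : QuadraticForm R M) 1) :
    x * y = -(y * x) := by
  induction x, hx using CliffordAlgebra.odd_induction with
  | ι v =>
    induction y, hy using CliffordAlgebra.odd_induction with
    | ι w => exact eq_neg_of_add_eq_zero_left (ι_add_mul_swap v w)
    | add y y' _ _ h h' => rw [mul_add, add_mul, h, h', neg_add]
    | ι_mul_ι_mul a b y _ h =>
      rw [← mul_assoc, ← (commute_ι_mul_ι a b _).eq, mul_assoc, h]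
      simp only [mul_neg, mul_assoc]
  | add x x' _ _ h h' => rw [add_mul, mul_add, h, h', neg_add]
  | ι_mul_ι_mul a b x _ h =>
    rw [mul_assoc, h, mul_neg, ← mul_assoc, (commute_ι_mul_ι a b y).eq, mul_assoc]

section Transpose

variable {l n p : Type*} [Fintype n] {X : Matrix l n (ExteriorAlgebra R M)}
  {Y : Matrix n p (ExteriorAlgebra R M)}

theorem transpose_mul_of_mem_evenOdd_zero_left
    (hX : ∀ i j, X i j ∈ CliffordAlgebra.evenOdd (0 : QuadraticForm R M) 0) :
    (X * Y)ᵀ = Yᵀ * Xᵀ := by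
  ext i j
  exact Finset.sum_congr rfl fun k _ => (commute_of_mem_evenOdd_zero (hX j k) _).eq

theorem transpose_mul_of_mem_evenOdd_zero_right
    (hY : ∀ i j, Y i j ∈ CliffordAlgebra.evenOdd (0 : QuadraticForm R M) 0) :
    (X * Y)ᵀ = Yᵀ * Xᵀ := by
  ext i j
  exact Finset.sum_congr rfl fun k _ => (commute_of_mem_evenOdd_zero (hY k i) _).eq.symm

theorem transpose_mul_of_mem_evenOdd_one
    (hX : ∀ i j, X i j ∈ CliffordAlgebra.evenOdd (0 : QuadraticForm R M) 1)
    (hY : ∀ i j, Y i j ∈ CliffordAlgebra.evenOdd (0 : QuadraticForm R M) 1) :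
    (X * Y)ᵀ = -(Yᵀ * Xᵀ) := by
  ext i j
  simp only [transpose_apply, mul_apply, Matrix.neg_apply, ← Finset.sum_neg_distrib]
  exact Finset.sum_congr rfl fun k _ => mul_eq_neg_mul_of_mem_evenOdd_one (hX j k) (hY k i)

end Transpose

local notation "𝒥" => LinearMap.range (ι R : M →ₗ[R] ExteriorAlgebra R M)

theorem top_mul_range_ι : ⊤ * 𝒥 = 𝒥 * ⊤ := by
  rw [← CliffordAlgebra.iSup_ι_range_eq_top (Q := (0 : QuadraticForm R M)), Submodule.iSup_mul,
    Submodule.mul_iSup]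
  exact iSup_congr fun i => pow_mul_comm' _ i

theorem range_ι_mul_top_pow_le (n : ℕ) : (𝒥 * ⊤) ^ n ≤ 𝒥 ^ n * ⊤ := by
  induction n with
  | zero => simp
  | succ n ih =>
    calc (𝒥 * ⊤) ^ (n + 1) ≤ 𝒥 ^ n * ⊤ * (𝒥 * ⊤) :=
          pow_succ (𝒥 * ⊤) n ▸ mul_le_mul_left ih _
      _ = 𝒥 ^ n * (𝒥 * ⊤) * ⊤ := by
          rw [mul_assoc, ← mul_assoc ⊤, top_mul_range_ι]; simp only [mul_assoc]
      _ ≤ 𝒥 ^ (n + 1) * ⊤ := by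
          rw [pow_succ, mul_assoc, mul_assoc, mul_assoc]
          exact mul_le_mul_right (mul_le_mul_right le_top _) _

theorem mem_range_ι_mul_top_of_algebraMapInv_eq_zero {x : ExteriorAlgebra R M}
    (hx : algebraMapInv x = 0) : x ∈ 𝒥 * ⊤ := by
  have h_pow : ∀ i, 𝒥 ^ i ≤ 1 ⊔ 𝒥 * ⊤
    | 0 => (pow_zero 𝒥).le.trans le_sup_left
    | i + 1 => (pow_succ' 𝒥 i).le.trans (le_sup_of_le_right (mul_le_mul_right le_top 𝒥))
  have hx_mem : x ∈ ⨆ i, 𝒥 ^ i := by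
    rw [CliffordAlgebra.iSup_ι_range_eq_top]; trivial
  have h_ker :
      𝒥 * ⊤ ≤ LinearMap.ker (algebraMapInv : ExteriorAlgebra R M →ₐ[R] R).toLinearMap :=
    Submodule.mul_le.mpr <| by
      rintro _ ⟨v, rfl⟩ y -
      simp [algebraMapInv]
  obtain ⟨_, hr, z, hz, rfl⟩ := Submodule.mem_sup.mp (iSup_le h_pow hx_mem)
  obtain ⟨r, rfl⟩ := Submodule.mem_one.mp hr
  rw [map_add, show algebraMapInv z = 0 from h_ker hz, add_zero, algebraMap_leftInverse] at hx
  rwa [hx, map_zero, zero_add]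

theorem range_ι_pow_eq_bot {K V : Type*} [Field K] [AddCommGroup V] [Module K V]
    [FiniteDimensional K V] {n : ℕ} (hn : Module.finrank K V < n) :
    LinearMap.range (ι K : V →ₗ[K] ExteriorAlgebra K V) ^ n = ⊥ := by
  have h := exteriorPower.finrank_eq K (M := V) n
  rwa [Nat.choose_eq_zero_of_lt hn, Submodule.finrank_eq_zero] at h

end ExteriorAlgebra

theorem Matrix.pow_apply_mem_pow {n R A : Type*} [Fintype n] [DecidableEq n] [CommSemiring R]
    [Semiring A] [Algebra R A] {S : Submodule R A} {X : Matrix n n A} (hX : ∀ i j, X i j ∈ S)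
    (p : ℕ) (i j : n) : (X ^ p) i j ∈ S ^ p := by
  induction p generalizing i j with
  | zero =>
    rw [pow_zero, pow_zero, one_apply]
    split_ifs
    · exact Submodule.mem_one.mpr ⟨1, map_one _⟩
    · exact Submodule.zero_mem _
  | succ p ih =>
    rw [pow_succ X, mul_apply, pow_succ]
    exact Submodule.sum_mem _ fun l _ => Submodule.mul_mem_mul (ih i l) (hX l j)

theorem ExteriorAlgebra.matrix_pow_finrank_succ_eq_zero {ι K V : Type*} [Fintype ι]
    [DecidableEq ι] [Field K] [AddCommGroup V] [Module K V] [FiniteDimensional K V]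
    {X : Matrix ι ι (ExteriorAlgebra K V)} (hX : ∀ i j, algebraMapInv (X i j) = 0) :
    X ^ (Module.finrank K V + 1) = 0 := by
  ext i j
  have h := range_ι_mul_top_pow_le _ <| Matrix.pow_apply_mem_pow
    (fun i j => mem_range_ι_mul_top_of_algebraMapInv_eq_zero (hX i j)) (Module.finrank K V + 1) i j
  rwa [range_ι_pow_eq_bot (Nat.lt_succ_self _), Submodule.bot_mul, Submodule.mem_bot] at h

theorem IsNilpotent.exp_nsmul {A : Type*} [Ring A] [Module ℚ A] {a : A} (h : IsNilpotent a)
    (p : ℕ) : exp (p • a) = exp a ^ p := by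
  induction p with
  | zero => simp
  | succ p ih =>
    rw [succ_nsmul, exp_add_of_commute ((Commute.refl a).smul_left p) (h.smul p) h, ih,
      _root_.pow_succ]

open Finset in
theorem IsNilpotent.exp_nsmul_mul_mul_exp_nsmul_eq_sum {A : Type*} [Ring A] [Algebra ℚ A]
    {X Y : A} {k : ℕ} (hX : X ^ k = 0) (hY : Y ^ k = 0) (Q : A) (p : ℕ) :
    exp (p • X) * Q * exp (p • Y) = ∑ ij ∈ range k ×ˢ range k,
      (p : ℚ) ^ (ij.1 + ij.2) • ((ij.1.factorial : ℚ)⁻¹ * (ij.2.factorial : ℚ)⁻¹) •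
        (X ^ ij.1 * Q * Y ^ ij.2) := by
  have h_exp (Z : A) (hZ : Z ^ k = 0) :
      exp (p • Z) = ∑ i ∈ range k, ((p : ℚ) ^ i * (i.factorial : ℚ)⁻¹) • Z ^ i := by
    rw [exp_eq_sum (by rw [smul_pow, hZ, smul_zero])]
    refine sum_congr rfl fun i _ => ?_
    rw [smul_pow, ← Nat.cast_smul_eq_nsmul ℚ, smul_smul, mul_comm, Nat.cast_pow]
  rw [h_exp X hX, h_exp Y hY, sum_mul, sum_mul, sum_product]
  simp only [mul_sum, smul_mul_assoc, mul_smul_comm, smul_smul]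
  refine sum_congr rfl fun i _ => sum_congr rfl fun j _ => ?_
  congr 1
  ring

theorem pow_mul_mul_pow_eq_of_mul_mul_eq {M : Type*} [Monoid M] {b q e : M} (h : b * q * e = q)
    (p : ℕ) : b ^ p * q * e ^ p = q := by
  induction p with
  | zero => simp
  | succ p ih =>
    calc b ^ (p + 1) * q * e ^ (p + 1) = b * (b ^ p * q * e ^ p) * e := by
          rw [pow_succ', pow_succ]; simp only [mul_assoc]
      _ = q := by rw [ih, h]

open Polynomial in
theorem Finset.sum_filter_eq_zero_of_sum_pow_smul_eq_const {K V ι : Type*} [Field K] [CharZero K]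
    [AddCommGroup V] [Module K V] (s : Finset ι) (e : ι → ℕ) (w : ι → V) (c : V)
    (h : ∀ x : ℕ, ∑ i ∈ s, (x : K) ^ e i • w i = c) {r : ℕ} (hr : r ≠ 0) :
    ∑ i ∈ s with e i = r, w i = 0 := by
  refine (Module.forall_dual_apply_eq_zero_iff K _).mp fun φ => ?_
  set P : K[X] := ∑ i ∈ s, C (φ (w i)) * X ^ e i
  have hP : P - C (φ c) = 0 := by
    refine eq_zero_of_infinite_isRoot _ <| Set.infinite_of_injective_forall_mem
      Nat.cast_injective fun x : ℕ => IsRoot.def.mpr ?_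
    rw [eval_sub, eval_C, ← h x, map_sum, sub_eq_zero]
    simp only [P, eval_finsetSum, eval_mul, eval_C, eval_pow, eval_X, map_smul, smul_eq_mul]
    exact Finset.sum_congr rfl fun i _ => mul_comm _ _
  have h_coeff := congrArg (coeff · r) hP
  rw [map_sum]
  simpa [P, finsetSum_coeff, coeff_C_mul_X_pow, coeff_C, hr, Finset.sum_filter, eq_comm]
    using h_coeff

section Supermatrix

open ExteriorAlgebra

variable {N m k : ℕ}

def blockParity : Fin m ⊕ Fin k → ZMod 2 := Sum.elim 0 1

theorem isSuperMat_iff {M : Matrix (Fin m ⊕ Fin k) (Fin m ⊕ Fin k) (GA N)} :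
    IsSuperMat M ↔ ∀ a b, M a b ∈
      CliffordAlgebra.evenOdd (0 : QuadraticForm ℝ (Fin N → ℝ))
        (blockParity a + blockParity b) := by
  simp only [IsSuperMat, GA.IsEven, GA.IsOdd, Sum.forall, blockParity, Sum.elim_inl, Sum.elim_inr,
    Pi.zero_apply, Pi.one_apply, add_zero, zero_add, CharTwo.add_self_eq_zero, toBlocks₁₁,
    toBlocks₁₂, toBlocks₂₁, toBlocks₂₂, of_apply, forall_and]
  tauto

theorem IsSuperMat.mul {M P : Matrix (Fin m ⊕ Fin k) (Fin m ⊕ Fin k) (GA N)} (hM : IsSuperMat M)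
    (hP : IsSuperMat P) : IsSuperMat (M * P) := by
  rw [isSuperMat_iff] at *
  intro a b
  have h_parity : ∀ x y z : ZMod 2, x + y + (y + z) = x + z := by decide
  rw [mul_apply]
  refine Submodule.sum_mem _ fun c _ => ?_
  simpa only [h_parity] using SetLike.mul_mem_graded (hM a c) (hP c b)

theorem IsSuperMat.one : IsSuperMat (1 : Matrix (Fin m ⊕ Fin k) (Fin m ⊕ Fin k) (GA N)) := by
  rw [isSuperMat_iff]
  intro a b
  rw [one_apply]
  split_ifs with hab
  · rw [hab, CharTwo.add_self_eq_zero]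
    exact SetLike.one_mem_graded _
  · exact Submodule.zero_mem _

theorem IsSuperMat.pow {M : Matrix (Fin m ⊕ Fin k) (Fin m ⊕ Fin k) (GA N)} (hM : IsSuperMat M)
    (p : ℕ) : IsSuperMat (M ^ p) := by
  induction p with
  | zero => exact pow_zero M ▸ IsSuperMat.one
  | succ p ih => exact pow_succ M p ▸ ih.mul hM

theorem superT_mul {M P : Matrix (Fin m ⊕ Fin k) (Fin m ⊕ Fin k) (GA N)} (hM : IsSuperMat M)
    (hP : IsSuperMat P) : superT (M * P) = superT P * superT M := by
  obtain ⟨hA, hB, hC, hD⟩ := hM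
  obtain ⟨hA', hB', hC', hD'⟩ := hP
  rw [← fromBlocks_toBlocks M, ← fromBlocks_toBlocks P]
  simp only [superT, fromBlocks_multiply, toBlocks_fromBlocks₁₁, toBlocks_fromBlocks₁₂,
    toBlocks_fromBlocks₂₁, toBlocks_fromBlocks₂₂, transpose_add,
    transpose_mul_of_mem_evenOdd_zero_left hA, transpose_mul_of_mem_evenOdd_zero_left hD,
    transpose_mul_of_mem_evenOdd_zero_right hA', transpose_mul_of_mem_evenOdd_zero_right hD',
    transpose_mul_of_mem_evenOdd_one hB hC', transpose_mul_of_mem_evenOdd_one hC hB']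
  simp only [Matrix.neg_mul, Matrix.mul_neg, neg_add]

def superTLinearMap : Matrix (Fin m ⊕ Fin k) (Fin m ⊕ Fin k) (GA N) →ₗ[ℝ]
    Matrix (Fin m ⊕ Fin k) (Fin m ⊕ Fin k) (GA N) where
  toFun := superT
  map_add' M P := by
    ext (i | i) (j | j) <;>
      simp [superT, toBlocks₁₁, toBlocks₁₂, toBlocks₂₁, toBlocks₂₂, add_comm]
  map_smul' c M := by
    ext (i | i) (j | j) <;> simp [superT, toBlocks₁₁, toBlocks₁₂, toBlocks₂₁, toBlocks₂₂]

theorem superT_zero : superT (0 : Matrix (Fin m ⊕ Fin k) (Fin m ⊕ Fin k) (GA N)) = 0 :=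
  map_zero superTLinearMap

theorem superT_one : superT (1 : Matrix (Fin m ⊕ Fin k) (Fin m ⊕ Fin k) (GA N)) = 1 := by
  ext (i | i) (j | j) <;>
    simp [superT, toBlocks₁₁, toBlocks₁₂, toBlocks₂₁, toBlocks₂₂, one_apply, eq_comm]

theorem superT_pow {M : Matrix (Fin m ⊕ Fin k) (Fin m ⊕ Fin k) (GA N)} (hM : IsSuperMat M)
    (p : ℕ) : superT (M ^ p) = superT M ^ p := by
  induction p with
  | zero => rw [pow_zero, pow_zero, superT_one]
  | succ p ih => rw [pow_succ, superT_mul (hM.pow p) hM, ih, pow_succ']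

theorem superT_expNil {M : Matrix (Fin m ⊕ Fin k) (Fin m ⊕ Fin k) (GA N)} (hM : IsSuperMat M) :
    superT (expNil M) = expNil (superT M) := by
  change superTLinearMap (expNil M) = _
  simp only [expNil, map_sum, map_smul]
  exact Finset.sum_congr rfl fun p _ => congrArg _ (superT_pow hM p)

theorem expNil_eq_exp {M : Matrix (Fin m ⊕ Fin k) (Fin m ⊕ Fin k) (GA N)}
    (hM : M ^ (N + 1) = 0) : expNil M = IsNilpotent.exp M := by
  rw [IsNilpotent.exp_eq_sum hM, expNil]
  refine Finset.sum_congr rfl fun j _ => ?_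
  rw [← Rat.cast_smul_eq_qsmul ℝ, Rat.cast_inv, Rat.cast_natCast]

end Supermatrix

open IsNilpotent Finset in
/-- if `𝐙` is a nilpotent supermatrix (all entries with zero body) such
that `e^𝐙 ∈ O₀`, i.e. `(e^𝐙)^{ST} Q e^𝐙 = Q`, then `𝐙^{ST} Q + Q 𝐙 = 0`. -/
theorem exp_nilpotent_mem_O0_implies_so0 (N m n : ℕ)
    (Z : Matrix (Fin m ⊕ Fin (2*n)) (Fin m ⊕ Fin (2*n)) (GA N))
    (hZs : IsSuperMat Z)
    (hZnil : ∀ i j, ExteriorAlgebra.algebraMapInv (Z i j) = 0)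
    (hE : superT (expNil Z) * Qm N m n * expNil Z = Qm N m n) :
    superT Z * Qm N m n + Qm N m n * Z = 0 := by
  set Q := Qm N m n
  set A := superT Z
  have hZ : Z ^ (N + 1) = 0 := by
    simpa using ExteriorAlgebra.matrix_pow_finrank_succ_eq_zero hZnil
  have hA : A ^ (N + 1) = 0 := by rw [← superT_pow hZs, hZ, superT_zero]
  rw [superT_expNil hZs, expNil_eq_exp hA, expNil_eq_exp hZ] at hE
  have h_const (p : ℕ) : exp (p • A) * Q * exp (p • Z) = Q := by
    rw [exp_nsmul ⟨_, hA⟩, exp_nsmul ⟨_, hZ⟩]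
    exact pow_mul_mul_pow_eq_of_mul_mul_eq hE p
  -- Expanding up to degree `N + 1` keeps `(1, 0)` and `(0, 1)` in the index set even when `N = 0`.
  have h_lin := sum_filter_eq_zero_of_sum_pow_smul_eq_const (K := ℚ) _ _ _ Q (fun p =>
    (exp_nsmul_mul_mul_exp_nsmul_eq_sum (k := N + 2) (pow_eq_zero_of_le (by omega) hA)
      (pow_eq_zero_of_le (by omega) hZ) Q p).symm.trans (h_const p)) one_ne_zero
  have h_deg_one : (range (N + 2) ×ˢ range (N + 2)).filter (fun ij => ij.1 + ij.2 = 1) =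
      {(1, 0), (0, 1)} := by
    ext ⟨i, j⟩
    simp only [mem_filter, mem_product, mem_range, mem_insert, mem_singleton, Prod.mk.injEq]
    omega
  rw [h_deg_one, sum_pair (by simp)] at h_lin
  simpa using h_lin

end
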